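/- Let A_1,...,A_N be d×d real matrices with non-negative entries. Then the limit as n→∞ of (Σ_{i_1,...,i_n=1}^N ‖A_{i_n}⋯A_{i_1}‖)^{1/n} exists and equals the spectral radius ρ(Σ_{i=1}^N A_i). -/

import Mathlib

/-!
Write `B = ∑ i, A i`. Expanding `B ^ n` over words gives `∑_w A_w`, a sum of entrywise
non-negative matrices, so the entrywise `ℓ¹` norm of `B ^ n` is the sum of the entrywise `ℓ¹`
norms of the products `A_w`. On `d × d` matrices the `ℓ²` operator norm and the entrywise `ℓ¹`
norm agree up to a factor `d²`, which disappears under `n`-th roots. Hence the sequence has the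
same limit as `‖B ^ n‖ ^ (1 / n)`, computed for the complexification of `B` (whose entrywise norms
are those of `B`), and that limit is `ρ(B)` by Gelfand's formula.
-/

open Filter Topology

noncomputable def opNorm {n : Type*} [Fintype n] [DecidableEq n] (A : Matrix n n ℝ) : ℝ :=
  ‖Matrix.toEuclideanCLM (𝕜 := ℝ) A‖

noncomputable def specRad {n : Type*} [Fintype n] [DecidableEq n] (B : Matrix n n ℝ) : ℝ :=
  sSup {r : ℝ | ∃ μ ∈ spectrum ℂ (B.map (fun x => (x : ℂ))), r = ‖μ‖}

noncomputable def singularValues {d : ℕ} (A : Matrix (Fin d) (Fin d) ℝ) : Fin d → ℝ :=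
  fun i => Real.sqrt ((Matrix.isHermitian_conjTranspose_mul_self A).eigenvalues
    (Tuple.sort (fun j => -((Matrix.isHermitian_conjTranspose_mul_self A).eigenvalues j)) i))

noncomputable def svf {d : ℕ} (A : Matrix (Fin d) (Fin d) ℝ) (s : ℝ) : ℝ :=
  if s < d then
    ∏ i : Fin d,
      if (i : ℤ) < ⌊s⌋ then singularValues A i
      else if (i : ℤ) = ⌊s⌋ then singularValues A i ^ (s - (⌊s⌋ : ℝ)) else 1
  else |A.det| ^ (s / d)

def IsGenPerm {n : Type*} [Fintype n] (A : Matrix n n ℝ) : Prop :=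
  (∀ i, ∃! j, A i j ≠ 0) ∧ (∀ j, ∃! i, A i j ≠ 0)

abbrev SIdx (d k : ℕ) := {p : Finset (Fin d) × Fin d // p.1.card = k ∧ p.2 ∉ p.1}

noncomputable def Pmat {d : ℕ} (s : ℝ) (k : ℕ) (π : Equiv.Perm (Fin d)) (a : Fin d → ℝ) :
    Matrix (SIdx d k) (SIdx d k) ℝ :=
  fun q p =>
    if q.1.1 = p.1.1.image π ∧ q.1.2 = π p.1.2 then
      (∏ j ∈ p.1.1, |a j|) * |a p.1.2| ^ (s - (k : ℝ))
    else 0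

noncomputable def pressure {d N : ℕ} (A : Fin N → Matrix (Fin d) (Fin d) ℝ) (s : ℝ) : ℝ :=
  ⨅ n : ℕ, (1 / ((n : ℝ) + 1)) *
    Real.log (∑ f : Fin (n + 1) → Fin N, svf ((List.ofFn fun m => A (f m)).prod) s)

theorem tendsto_const_rpow_one_div_nat {K : ℝ} (hK : 0 < K) :
    Tendsto (fun n : ℕ => K ^ (1 / n : ℝ)) atTop (𝓝 1) := by
  simpa only [Real.rpow_zero, Function.comp_def] using
    (Real.continuousAt_const_rpow hK.ne').tendsto.comp tendsto_one_div_atTop_nhds_zero_nat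

theorem tendsto_rpow_one_div_iff_of_le_of_le_mul {x y : ℕ → ℝ} {C L : ℝ}
    (hx : ∀ n, 0 ≤ x n) (hxy : ∀ n, x n ≤ y n) (hyx : ∀ n, y n ≤ C * x n) :
    Tendsto (fun n => x n ^ (1 / n : ℝ)) atTop (𝓝 L) ↔
      Tendsto (fun n => y n ^ (1 / n : ℝ)) atTop (𝓝 L) := by
  set K := max C 1
  have hK : 0 < K := lt_max_of_lt_right one_pos
  have hy n : 0 ≤ y n := (hx n).trans (hxy n)
  have hyK n : y n ≤ K * x n := (hyx n).trans (by gcongr; exacts [hx n, le_max_left _ _])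
  have hroot_le {u v : ℝ} (hu : 0 ≤ u) (huv : u ≤ v) (n : ℕ) :
      u ^ (1 / n : ℝ) ≤ v ^ (1 / n : ℝ) :=
    Real.rpow_le_rpow hu huv (by positivity)
  constructor
  · intro h
    refine tendsto_of_tendsto_of_tendsto_of_le_of_le h
      (by simpa only [one_mul] using (tendsto_const_rpow_one_div_nat hK).mul h)
      (fun n => hroot_le (hx n) (hxy n) n) fun n => ?_
    rw [← Real.mul_rpow hK.le (hx n)]
    exact hroot_le (hy n) (hyK n) n
  · intro h
    refine tendsto_of_tendsto_of_tendsto_of_le_of_le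
      (by simpa only [one_mul] using (tendsto_const_rpow_one_div_nat (inv_pos.2 hK)).mul h) h
      (fun n => ?_) fun n => hroot_le (hx n) (hxy n) n
    rw [← Real.mul_rpow (inv_pos.2 hK).le (hy n)]
    exact hroot_le (mul_nonneg (inv_pos.2 hK).le (hy n)) ((inv_mul_le_iff₀ hK).2 (hyK n)) n

theorem sum_pow_eq_sum_prod_ofFn {R ι : Type*} [Semiring R] [Fintype ι] (f : ι → R) (n : ℕ) :
    (∑ i, f i) ^ n = ∑ p : Fin n → ι, (List.ofFn fun m => f (p m)).prod := by
  induction n with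
  | zero => simp
  | succ n ih =>
    rw [pow_succ', ih, Finset.sum_mul_sum, ← Fintype.sum_prod_type']
    exact Fintype.sum_equiv (Fin.consEquiv fun _ => ι) _ _ fun p => by simp [List.ofFn_succ]

theorem Matrix.list_prod_apply_nonneg {n α : Type*} [Fintype n] [DecidableEq n] [Semiring α]
    [PartialOrder α] [IsOrderedRing α] (L : List (Matrix n n α))
    (hL : ∀ M ∈ L, ∀ i j, 0 ≤ M i j) (i j : n) : 0 ≤ L.prod i j := by
  induction L generalizing i with
  | nil => by_cases h : i = j <;> simp [h]
  | cons M L ih =>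
    rw [List.prod_cons, Matrix.mul_apply]
    exact Finset.sum_nonneg fun k _ =>
      mul_nonneg (hL M List.mem_cons_self i k) (ih (fun M' hM' => hL M' (.tail _ hM')) k)

theorem EuclideanSpace.norm_le_sum_norm {𝕜 ι : Type*} [RCLike 𝕜] [Fintype ι]
    (x : EuclideanSpace 𝕜 ι) : ‖x‖ ≤ ∑ i, ‖x i‖ := by
  rw [EuclideanSpace.norm_eq]
  calc √(∑ i, ‖x i‖ ^ 2) ≤ √((∑ i, ‖x i‖) ^ 2) :=
        Real.sqrt_le_sqrt (Finset.sum_sq_le_sq_sum_of_nonneg fun i _ => norm_nonneg _)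
    _ = ∑ i, ‖x i‖ := Real.sqrt_sq (by positivity)

open scoped Matrix.Norms.L2Operator

namespace Matrix

section L2OpNorm

variable {𝕜 m n : Type*} [RCLike 𝕜] [Fintype m] [Fintype n] [DecidableEq n]

theorem l2_opNorm_le_sum_norm_entries (A : Matrix m n 𝕜) : ‖A‖ ≤ ∑ i, ∑ j, ‖A i j‖ := by
  rw [l2_opNorm_def]
  refine ContinuousLinearMap.opNorm_le_bound _ (by positivity) fun x => ?_
  calc _ ≤ ∑ i, ‖(A *ᵥ x) i‖ := EuclideanSpace.norm_le_sum_norm _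
    _ ≤ ∑ i, ∑ j, ‖A i j‖ * ‖x‖ := by
      gcongr with i
      refine (norm_sum_le _ _).trans (Finset.sum_le_sum fun j _ => ?_)
      rw [norm_mul]
      gcongr
      exact PiLp.norm_apply_le x j
    _ = (∑ i, ∑ j, ‖A i j‖) * ‖x‖ := by simp only [Finset.sum_mul]

theorem norm_entry_le_l2_opNorm (A : Matrix m n 𝕜) (i : m) (j : n) : ‖A i j‖ ≤ ‖A‖ := by
  have h := A.l2_opNorm_mulVec (EuclideanSpace.single j 1)
  rw [PiLp.norm_single, norm_one, mul_one] at h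
  refine le_trans (le_of_eq ?_) ((PiLp.norm_apply_le _ i).trans h)
  simp [mulVec_single]

theorem sum_norm_entries_le_card_mul_l2_opNorm (A : Matrix m n 𝕜) :
    ∑ i, ∑ j, ‖A i j‖ ≤ Fintype.card m * Fintype.card n * ‖A‖ := by
  calc ∑ i, ∑ j, ‖A i j‖ ≤ ∑ _i : m, ∑ _j : n, ‖A‖ := by
        gcongr with i _ j
        exact A.norm_entry_le_l2_opNorm i j
    _ = _ := by simp only [Finset.sum_const, Finset.card_univ, nsmul_eq_mul, mul_assoc]

end L2OpNorm

theorem sum_norm_entries_sum_of_nonneg {ι m n : Type*} [Fintype ι] [Fintype m] [Fintype n]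
    (M : ι → Matrix m n ℝ) (hM : ∀ s i j, 0 ≤ M s i j) :
    ∑ i, ∑ j, ‖(∑ s, M s) i j‖ = ∑ s, ∑ i, ∑ j, ‖M s i j‖ := by
  calc ∑ i, ∑ j, ‖(∑ s, M s) i j‖ = ∑ i, ∑ j, ∑ s, ‖M s i j‖ := by
        simp only [sum_apply, Real.norm_of_nonneg (hM _ _ _),
          Real.norm_of_nonneg (Finset.sum_nonneg fun s _ => hM s _ _)]
    _ = ∑ s, ∑ i, ∑ j, ‖M s i j‖ :=
        (Finset.sum_congr rfl fun i _ => Finset.sum_comm).trans Finset.sum_comm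

end Matrix

theorem opNorm_eq_l2_opNorm {n : Type*} [Fintype n] [DecidableEq n] (A : Matrix n n ℝ) :
    opNorm A = ‖A‖ :=
  rfl

theorem spectralRadius_eq_coe_sSup_nnnorm {𝕜 A : Type*} [NormedField 𝕜] [Ring A] [Algebra 𝕜 A]
    {a : A} (ha : (spectrum 𝕜 a).Finite) :
    spectralRadius 𝕜 a = ↑(sSup (nnnorm '' spectrum 𝕜 a)) := by
  rw [ENNReal.coe_sSup (ha.image _).bddAbove, iSup_image]
  rfl

theorem Matrix.spectralRadius_ne_top {n : Type*} [Fintype n] [DecidableEq n]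
    (A : Matrix n n ℂ) : spectralRadius ℂ A ≠ ⊤ := by
  rw [spectralRadius_eq_coe_sSup_nnnorm A.finite_spectrum]
  exact ENNReal.coe_ne_top

theorem specRad_eq_toReal_spectralRadius {n : Type*} [Fintype n] [DecidableEq n]
    (B : Matrix n n ℝ) : specRad B = (spectralRadius ℂ (B.map (↑) : Matrix n n ℂ)).toReal := by
  rw [spectralRadius_eq_coe_sSup_nnnorm (Matrix.finite_spectrum _), ENNReal.coe_toReal,
    NNReal.coe_sSup, Set.image_image]
  simp only [coe_nnnorm, specRad]
  congr 1
  ext r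
  simp [eq_comm]

theorem tendsto_norm_pow_rpow_one_div_spectralRadius_toReal {A : Type*} [NormedRing A]
    [NormedAlgebra ℂ A] [CompleteSpace A] {a : A} (ha : spectralRadius ℂ a ≠ ⊤) :
    Tendsto (fun n : ℕ => ‖a ^ n‖ ^ (1 / n : ℝ)) atTop (𝓝 (spectralRadius ℂ a).toReal) :=
  ((ENNReal.tendsto_toReal ha).comp
    (spectrum.pow_norm_pow_one_div_tendsto_nhds_spectralRadius a)).congr fun n =>
    ENNReal.toReal_ofReal (by positivity)

theorem Matrix.tendsto_sum_norm_entries_pow_rpow_one_div {n : Type*} [Fintype n] [DecidableEq n]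
    (B : Matrix n n ℝ) :
    Tendsto (fun k : ℕ => (∑ i, ∑ j, ‖(B ^ k) i j‖) ^ (1 / k : ℝ)) atTop (𝓝 (specRad B)) := by
  set Bc : Matrix n n ℂ := B.map (↑)
  have hentries (k : ℕ) : ∑ i, ∑ j, ‖(Bc ^ k) i j‖ = ∑ i, ∑ j, ‖(B ^ k) i j‖ := by
    have : Bc ^ k = (B ^ k).map (↑) := (map_pow Complex.ofRealHom.mapMatrix B k).symm
    simp [this]
  rw [specRad_eq_toReal_spectralRadius]
  refine (tendsto_rpow_one_div_iff_of_le_of_le_mul (C := Fintype.card n * Fintype.card n)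
    (fun k => norm_nonneg (Bc ^ k)) (fun k => ?_) (fun k => ?_)).1
    (tendsto_norm_pow_rpow_one_div_spectralRadius_toReal Bc.spectralRadius_ne_top)
  · exact hentries k ▸ (Bc ^ k).l2_opNorm_le_sum_norm_entries
  · exact hentries k ▸ (Bc ^ k).sum_norm_entries_le_card_mul_l2_opNorm

theorem stmt0 {d N : ℕ} (A : Fin N → Matrix (Fin d) (Fin d) ℝ)
    (hA : ∀ i k l, 0 ≤ A i k l) :
    Tendsto
      (fun n : ℕ =>
        (∑ f : Fin n → Fin N, opNorm (List.ofFn fun m => A (f m)).prod) ^ (1 / (n : ℝ)))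
      atTop (nhds (specRad (∑ i, A i))) := by
  simp only [opNorm_eq_l2_opNorm]
  have hprod (n : ℕ) (f : Fin n → Fin N) (k l : Fin d) :
      0 ≤ (List.ofFn fun m => A (f m)).prod k l :=
    Matrix.list_prod_apply_nonneg _ (by simp [hA]) k l
  have hentries (n : ℕ) : ∑ k, ∑ l, ‖((∑ i, A i) ^ n) k l‖ =
      ∑ f : Fin n → Fin N, ∑ k, ∑ l, ‖(List.ofFn fun m => A (f m)).prod k l‖ := by
    rw [sum_pow_eq_sum_prod_ofFn, Matrix.sum_norm_entries_sum_of_nonneg _ (hprod n)]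
  refine (tendsto_rpow_one_div_iff_of_le_of_le_mul (C := d * d) (fun n => ?_) (fun n => ?_)
    (fun n => ?_)).2 (Matrix.tendsto_sum_norm_entries_pow_rpow_one_div _)
  · exact Finset.sum_nonneg fun f _ => norm_nonneg _
  · rw [hentries]
    gcongr with f
    exact Matrix.l2_opNorm_le_sum_norm_entries _
  · rw [hentries, Finset.mul_sum]
    gcongr with f
    simpa using Matrix.sum_norm_entries_le_card_mul_l2_opNorm (List.ofFn fun m => A (f m)).prod
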